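/- arXiv:2602.07851 — 2 statements merged into one kernel-verified Lean document; each statement's English description precedes it below -/
import Mathlib

section
/- Suppose s_f − s₀ = (v₀ + v_f)/2, a > 0, and |v_f − v₀| > a. Then the pair (u_𝒜, u_ℬ) consisting of the constant functions u_ℬ(t) = sgn(v_f − v₀)·a and u_𝒜(t) = v_f − v₀ for all t ∈ [0,1] is a best approximation pair for 𝒜 and ℬ; in particular, the best approximation control in ℬ is the constant a if v_f − v₀ > a and the constant −a if v_f − v₀ < −a. -/
open MeasureTheory

/-- The measure on ℝ representing integration over the interval [0,1]. -/
noncomputable def mu01 : Measure ℝ := volume.restrict (Set.Icc 0 1)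

/-- The affine set 𝒜 of controls in L²([0,1],ℝ) steering the double integrator
from (s₀, v₀) to (s_f, v_f). -/
def setA (s0 sf v0 vf : ℝ) : Set (Lp ℝ 2 mu01) :=
  {u | (∫ t, u t ∂mu01) = vf - v0 ∧ (∫ t, (1 - t) * u t ∂mu01) = sf - s0 - v0}

/-- The box ℬ of controls bounded in absolute value by `a` a.e. on [0,1]. -/
def setB (a : ℝ) : Set (Lp ℝ 2 mu01) :=
  {u | ∀ᵐ t ∂mu01, |u t| ≤ a}

/-!
By Cauchy–Schwarz against the constant `1`, `|∫ f| ≤ ‖f‖` in `L²` of a probability measure.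
Every `x ∈ 𝒜` has mean `v_f − v₀` and every `y ∈ ℬ` has mean in `[−a, a]`, so
`‖x − y‖ ≥ |v_f − v₀| − a`. The constant pair attains this bound, and it is admissible because
`∫₀¹ (1 − t) dt = 1/2` turns the second constraint on the constant `v_f − v₀` into
`s_f − s₀ = (v₀ + v_f)/2`.
-/

namespace MeasureTheory

variable {α : Type*} [MeasurableSpace α] {μ : Measure α} [IsProbabilityMeasure μ]

theorem Lp.norm_const_of_isProbabilityMeasure {E : Type*} [NormedAddCommGroup E]
    {p : ENNReal} (hp : p ≠ 0) (c : E) : ‖Lp.const p μ c‖ = ‖c‖ := by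
  simp [Lp.norm_const p μ c hp]

theorem L2.abs_integral_le_norm (f : Lp ℝ 2 μ) : |∫ t, f t ∂μ| ≤ ‖f‖ := by
  have hinner : inner ℝ (Lp.const 2 μ (1 : ℝ)) f = ∫ t, f t ∂μ := by
    simpa using L2.inner_indicatorConstLp_one (𝕜 := ℝ) MeasurableSet.univ (measure_ne_top μ _) f
  simpa [hinner, Lp.norm_const_of_isProbabilityMeasure two_ne_zero] using
    abs_real_inner_le_norm (Lp.const 2 μ (1 : ℝ)) f

theorem L2.integral_coeFn_sub (x y : Lp ℝ 2 μ) :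
    ∫ t, (x - y) t ∂μ = ∫ t, x t ∂μ - ∫ t, y t ∂μ := by
  rw [integral_congr_ae (Lp.coeFn_sub x y)]
  exact integral_sub ((Lp.memLp x).integrable one_le_two) ((Lp.memLp y).integrable one_le_two)

theorem L2.abs_sub_le_norm_sub_of_integral_eq {x y : Lp ℝ 2 μ} {c a : ℝ}
    (hx : ∫ t, x t ∂μ = c) (hy : ∀ᵐ t ∂μ, |y t| ≤ a) : |c| - a ≤ ‖x - y‖ :=
  have hya : |∫ t, y t ∂μ| ≤ a := by
    simpa using norm_integral_le_of_norm_le_const (μ := μ) (f := fun t => y t) (by simpa using hy)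
  calc |c| - a ≤ |c - ∫ t, y t ∂μ| := by linarith [abs_sub_abs_le_abs_sub c (∫ t, y t ∂μ)]
    _ = |∫ t, (x - y) t ∂μ| := by rw [L2.integral_coeFn_sub, hx]
    _ ≤ ‖x - y‖ := L2.abs_integral_le_norm _

end MeasureTheory

theorem Real.abs_sign_mul_of_ne_zero {c : ℝ} (hc : c ≠ 0) (a : ℝ) : |Real.sign c * a| = |a| := by
  rcases Real.sign_apply_eq_of_ne_zero c hc with h | h <;> simp [h]

theorem Real.abs_sub_sign_mul {a c : ℝ} (ha : 0 ≤ a) (hac : a ≤ |c|) :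
    |c - Real.sign c * a| = |c| - a := by
  rcases lt_trichotomy c 0 with hc | rfl | hc
  · rw [abs_of_neg hc] at hac ⊢
    rw [Real.sign_of_neg hc, abs_of_nonpos (by linarith)]; ring
  · simp [le_antisymm (by simpa using hac) ha]
  · rw [abs_of_pos hc] at hac ⊢
    rw [Real.sign_of_pos hc, abs_of_nonneg (by linarith)]; ring

instance : IsProbabilityMeasure mu01 :=
  ⟨by simp [mu01]⟩

theorem integral_one_sub_mu01 : ∫ t, (1 - t) ∂mu01 = 1 / 2 := by
  rw [mu01, integral_Icc_eq_integral_Ioc, ← intervalIntegral.integral_of_le zero_le_one,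
    intervalIntegral.integral_sub intervalIntegrable_const intervalIntegral.intervalIntegrable_id]
  norm_num

theorem const_mem_setA {s0 sf v0 vf : ℝ} (hs : sf - s0 = (v0 + vf) / 2) :
    Lp.const 2 mu01 (vf - v0) ∈ setA s0 sf v0 vf := by
  have hconst := Lp.coeFn_const 2 mu01 (vf - v0)
  constructor
  · exact integral_eq_const hconst
  · calc ∫ t, (1 - t) * Lp.const 2 mu01 (vf - v0) t ∂mu01 = ∫ t, (1 - t) * (vf - v0) ∂mu01 :=
          integral_congr_ae (by filter_upwards [hconst] with t ht; rw [ht, Function.const_apply])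
      _ = sf - s0 - v0 := by rw [integral_mul_const, integral_one_sub_mu01]; linarith

theorem const_mem_setB {a b : ℝ} (hb : |b| ≤ a) : Lp.const 2 mu01 b ∈ setB a := by
  filter_upwards [Lp.coeFn_const 2 mu01 b] with t ht
  rwa [ht, Function.const_apply]

/-- Best approximation solution for the infeasible problem in the case
s_f - s₀ = (v₀+v_f)/2: the controls u_ℬ ≡ sgn(v_f - v₀)·a and u_𝒜 ≡ v_f - v₀
form a best approximation pair. -/
theorem stmt_9 (s0 sf v0 vf a : ℝ) (ha : 0 < a)
    (hs : sf - s0 = (v0 + vf) / 2) (hbig : |vf - v0| > a) :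
    ∃ uA uB : Lp ℝ 2 mu01,
      (∀ᵐ t ∂mu01, uB t = Real.sign (vf - v0) * a) ∧
      (∀ᵐ t ∂mu01, uA t = vf - v0) ∧
      uA ∈ setA s0 sf v0 vf ∧ uB ∈ setB a ∧
      (∀ x ∈ setA s0 sf v0 vf, ∀ y ∈ setB a, ‖uA - uB‖ ≤ ‖x - y‖) ∧
      (vf - v0 > a → ∀ᵐ t ∂mu01, uB t = a) ∧
      (vf - v0 < -a → ∀ᵐ t ∂mu01, uB t = -a) := by
  set c := vf - v0
  have hc : c ≠ 0 := fun h => by simp [h] at hbig; linarith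
  have hB := Lp.coeFn_const 2 mu01 (Real.sign c * a)
  refine ⟨Lp.const 2 mu01 c, Lp.const 2 mu01 (Real.sign c * a), hB, Lp.coeFn_const 2 mu01 c,
    const_mem_setA hs, const_mem_setB ?_, fun x hx y hy => ?_, fun h => ?_, fun h => ?_⟩
  · rw [Real.abs_sign_mul_of_ne_zero hc, abs_of_pos ha]
  · rw [← map_sub, Lp.norm_const_of_isProbabilityMeasure two_ne_zero, Real.norm_eq_abs,
      Real.abs_sub_sign_mul ha.le hbig.le]
    exact L2.abs_sub_le_norm_sub_of_integral_eq hx.1 hy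
  · filter_upwards [hB] with t ht
    rw [ht, Function.const_apply, Real.sign_of_pos (by linarith), one_mul]
  · filter_upwards [hB] with t ht
    rw [ht, Function.const_apply, Real.sign_of_neg (by linarith), neg_one_mul]
end

section
/- Let r, c₁ be real numbers. The affine function t ↦ −r + c₁·t on [0,1] belongs to 𝒜 if and only if r = c₁/2 − v_f + v₀ and c₁ = 6·(v₀ + v_f − 2·(s_f − s₀)). In particular, if c₁ ≠ 0 and this function belongs to 𝒜, then s_f − s₀ ≠ (v₀ + v_f)/2. -/
open MeasureTheory

theorem integral_mu01 (f : ℝ → ℝ) : ∫ t, f t ∂mu01 = ∫ t in (0 : ℝ)..1, f t := by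
  rw [mu01, integral_Icc_eq_integral_Ioc, intervalIntegral.integral_of_le zero_le_one]

theorem integral_mu01_affine (a b : ℝ) : ∫ t, (a + b * t) ∂mu01 = a + b / 2 := by
  rw [integral_mu01, intervalIntegral.integral_add intervalIntegrable_const
    ((continuous_const_mul b).intervalIntegrable 0 1), intervalIntegral.integral_const_mul]
  simp
  ring

theorem integral_mu01_one_sub_mul_affine (a b : ℝ) :
    ∫ t, (1 - t) * (a + b * t) ∂mu01 = a / 2 + b / 6 := by
  have hpoly : ∀ t : ℝ, (1 - t) * (a + b * t) = a + (b - a) * t - b * t ^ 2 := fun t => by ring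
  simp_rw [hpoly, integral_mu01]
  rw [intervalIntegral.integral_sub
      ((by fun_prop : Continuous fun t : ℝ => a + (b - a) * t).intervalIntegrable 0 1)
      ((by fun_prop : Continuous fun t : ℝ => b * t ^ 2).intervalIntegrable 0 1),
    intervalIntegral.integral_add intervalIntegrable_const
      ((continuous_const_mul _).intervalIntegrable 0 1),
    intervalIntegral.integral_const_mul, intervalIntegral.integral_const_mul]
  simp
  ring

theorem mem_setA_iff_of_ae_eq_affine {s0 sf v0 vf a b : ℝ} {u : Lp ℝ 2 mu01}
    (hu : ∀ᵐ t ∂mu01, u t = a + b * t) :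
    u ∈ setA s0 sf v0 vf ↔ a + b / 2 = vf - v0 ∧ a / 2 + b / 6 = sf - s0 - v0 := by
  have hmean : ∫ t, u t ∂mu01 = a + b / 2 := by
    rw [integral_congr_ae hu, integral_mu01_affine]
  have hmoment : ∫ t, (1 - t) * u t ∂mu01 = a / 2 + b / 6 := by
    rw [integral_congr_ae (hu.mono fun t ht => by rw [ht]), integral_mu01_one_sub_mul_affine]
  rw [setA, Set.mem_ofPred_eq, hmean, hmoment]

/-- The affine function t ↦ -r + c₁·t belongs to 𝒜 iff r = c₁/2 - v_f + v₀ and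
c₁ = 6·(v₀ + v_f - 2·(s_f - s₀)); in particular, if c₁ ≠ 0 and it belongs to 𝒜,
then s_f - s₀ ≠ (v₀ + v_f)/2. -/
theorem stmt_13 (s0 sf v0 vf r c1 : ℝ)
    (u : Lp ℝ 2 mu01) (hu : ∀ᵐ t ∂mu01, u t = -r + c1 * t) :
    (u ∈ setA s0 sf v0 vf ↔
      (r = c1 / 2 - vf + v0 ∧ c1 = 6 * (v0 + vf - 2 * (sf - s0)))) ∧
    (c1 ≠ 0 → u ∈ setA s0 sf v0 vf → sf - s0 ≠ (v0 + vf) / 2) := by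
  have hA : u ∈ setA s0 sf v0 vf ↔ r = c1 / 2 - vf + v0 ∧ c1 = 6 * (v0 + vf - 2 * (sf - s0)) := by
    rw [mem_setA_iff_of_ae_eq_affine hu]
    constructor <;> rintro ⟨h₁, h₂⟩ <;> constructor <;> linarith
  refine ⟨hA, fun hc1 hu_mem hmid => hc1 ?_⟩
  rw [(hA.mp hu_mem).2, hmid]
  ring
end
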